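/- Let W be a finite Coxeter group, J ⊆ I, y = w₀ w₀^{δ(J)} where δ is an automorphism of W permuting the simple reflections. For w ∈ W^{δ(J)} and u ∈ W_{δ(J)}, we have w y⁻¹ ∈ W^{J'} (where J' = yδ(J)y⁻¹ corresponds under the induced bijection of simple reflections) and ℓ(w u y⁻¹) = ℓ(w y⁻¹) + ℓ(u). -/

import Mathlib

/-!
Lengths are counted by inversion sets: `N(w) = {t reflection | ℓ(w t) < ℓ(w)}` has `ℓ(w)`
elements, and `N(v u) = N(u) ∆ u⁻¹ N(v) u`. Both come from Tits' sign cocycle: letting `s_i` act on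
`W × {±1}` by `(t, ε) ↦ (s_i t s_i, ±ε)`, with the sign flipped exactly at `t = s_i`, defines an
action of `W`, and the sign that `(t, 1)` picks up under `w` is `-1` exactly when `t ∈ N(w)`.
Hence `ℓ(w x) = ℓ(w) + ℓ(x)` for `w ∈ W^K`, `x ∈ W_K`, and `ℓ(x m) = ℓ(m) - ℓ(x)` for `x ∈ W_K`
and `m` the longest element of `W_K`.

Since `y⁻¹ = w₀^{δ(J)} w₀`, for `x ∈ W_{δ(J)}` this gives `ℓ(w x w₀) = ℓ(w₀) - ℓ(w) - ℓ(x)`.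
Taking `x = u w₀^{δ(J)}` yields the length formula; taking `x = w₀^{δ(J)} s_k` where
`s_i = w₀ s_k w₀` shows that every `i ∈ J'` raises the length of `w y⁻¹`.
-/

open CoxeterSystem
set_option autoImplicit false

variable {B W : Type*} [Group W] {M : CoxeterMatrix B} (cs : CoxeterSystem M W)

/-- The standard parabolic subgroup `W_J` generated by the simple reflections in `J`. -/
def CoxeterSystem.parabolic (J : Set B) : Subgroup W := Subgroup.closure (cs.simple '' J)

/-- The set `W^J` of minimal length representatives of the cosets `W/W_J`. -/
def CoxeterSystem.minRight (J : Set B) : Set W :=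
  {w | ∀ j ∈ J, cs.length w < cs.length (w * cs.simple j)}

/-- The set `^J W` of minimal length representatives of the cosets `W_J\W`. -/
def CoxeterSystem.minLeft (J : Set B) : Set W :=
  {w | ∀ j ∈ J, cs.length w < cs.length (cs.simple j * w)}

/-- The Bruhat order: `v ≤ w` iff some reduced word for `w` has a sublist whose product is `v`. -/
def CoxeterSystem.bruhatLE (v w : W) : Prop :=
  ∃ ω : List B, cs.IsReduced ω ∧ cs.wordProd ω = w ∧
    ∃ ω' : List B, ω'.Sublist ω ∧ cs.wordProd ω' = v

/-- The support of `w`: the indices of simple reflections occurring in a reduced word for `w`. -/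
def CoxeterSystem.supp (w : W) : Set B :=
  {i | ∃ ω : List B, cs.IsReduced ω ∧ cs.wordProd ω = w ∧ i ∈ ω}

theorem conj_eq_iff_eq_inv_conj {G : Type*} [Group G] {g t x : G} :
    g * t * g⁻¹ = x ↔ t = g⁻¹ * x * g := by
  constructor <;> rintro rfl <;> group

theorem Equiv.Perm.pow_apply_of_apply_eq_conj {G R : Type*} [Group G] [CommMonoid R]
    (P : Equiv.Perm (G × R)) (a : G) (g : G → R) (hP : ∀ t ε, P (t, ε) = (a * t * a⁻¹, ε * g t))
    (n : ℕ) (t : G) (ε : R) :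
    (P ^ n) (t, ε) =
      (a ^ n * t * (a ^ n)⁻¹, ε * ∏ j ∈ Finset.range n, g (a ^ j * t * (a ^ j)⁻¹)) := by
  induction n generalizing t ε with
  | zero => simp
  | succ n ih =>
    rw [pow_succ, Equiv.Perm.mul_apply, hP, ih, Finset.prod_range_succ']
    simp only [pow_succ, mul_inv_rev, pow_zero, one_mul, inv_one, mul_one, mul_assoc]
    ac_rfl

theorem inv_pow_mul_mul_pow_of_conj_eq_inv {G : Type*} [Group G] {a b : G}
    (hab : b * a * b⁻¹ = a⁻¹) (j : ℕ) : (a ^ j)⁻¹ * b * a ^ j = b * a ^ (2 * j) := by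
  have h : (a ^ j)⁻¹ = b * a ^ j * b⁻¹ := by rw [← conj_pow, hab, inv_pow]
  rw [h, two_mul, pow_add]
  group

theorem prod_sign_conj_pow_eq {G : Type*} [Group G] [DecidableEq G] {a b : G}
    (hab : b * a * b⁻¹ = a⁻¹) (t : G) (n : ℕ) :
    ∏ j ∈ Finset.range n, ((if a ^ j * t * (a ^ j)⁻¹ = b then -1 else 1) *
      (if a ^ j * t * (a ^ j)⁻¹ = b * a then -1 else 1) : ℤˣ) =
      ∏ k ∈ Finset.range (2 * n), if t = b * a ^ k then -1 else 1 := by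
  have hodd : ∀ j : ℕ, (a ^ j)⁻¹ * (b * a) * a ^ j = b * a ^ (2 * j + 1) := fun j ↦ by
    rw [pow_succ, ← mul_assoc b, ← inv_pow_mul_mul_pow_of_conj_eq_inv hab]
    group
  simp only [conj_eq_iff_eq_inv_conj, inv_pow_mul_mul_pow_of_conj_eq_inv hab, hodd]
  induction n with
  | zero => simp
  | succ n ih =>
    rw [Finset.prod_range_succ, ih, Nat.mul_succ, Finset.prod_range_succ, Finset.prod_range_succ,
      mul_assoc]

theorem prod_sign_pow_eq_one {G : Type*} [Monoid G] [DecidableEq G] {a : G} {m : ℕ}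
    (ha : a ^ m = 1) (b t : G) :
    ∏ k ∈ Finset.range (2 * m), (if t = b * a ^ k then -1 else 1 : ℤˣ) = 1 := by
  rw [two_mul, Finset.prod_range_add]
  simp only [pow_add, ha, one_mul, Int.units_mul_self]

namespace CoxeterSystem

local prefix:100 "s" => cs.simple
local prefix:100 "π" => cs.wordProd
local prefix:100 "ℓ" => cs.length
local prefix:100 "ris" => cs.rightInvSeq

open Classical in
noncomputable def signPerm (i : B) : Equiv.Perm (W × ℤˣ) :=
  Function.Involutive.toPerm (fun p ↦ (s i * p.1 * s i, if p.1 = s i then -p.2 else p.2)) <| by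
    rintro ⟨t, ε⟩
    have hconj : s i * t * s i = s i ↔ t = s i := by
      constructor
      · intro h
        simpa [mul_assoc] using congrArg (fun x ↦ s i * x * s i) h
      · rintro rfl; simp
    by_cases h : t = s i
    · subst h; simp
    · simp only [h, hconj.not.mpr h, if_false]
      simp [mul_assoc]

open Classical in
theorem signPerm_apply (i : B) (t : W) (ε : ℤˣ) :
    cs.signPerm i (t, ε) = (s i * t * s i, if t = s i then -ε else ε) := rfl

open Classical in
theorem signPerm_mul_signPerm_apply (i i' : B) (t : W) (ε : ℤˣ) :
    (cs.signPerm i * cs.signPerm i') (t, ε) = (s i * s i' * t * (s i * s i')⁻¹,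
      ε * ((if t = s i' then -1 else 1) * (if t = s i' * (s i * s i') then -1 else 1))) := by
  have hsnd : s i' * t * s i' = s i ↔ t = s i' * (s i * s i') := by
    constructor
    · intro h; rw [← h]; simp [mul_assoc]
    · rintro rfl; simp [← mul_assoc]
  rw [Equiv.Perm.mul_apply, signPerm_apply, signPerm_apply, hsnd]
  simp only [mul_inv_rev, inv_simple, mul_assoc, Prod.mk.injEq, true_and]
  by_cases h1 : t = s i' <;> by_cases h2 : t = s i' * (s i * s i') <;> simp [h1, h2]

/- `signPerm i * signPerm i'` is conjugation by `a = s i * s i'` with a sign change at the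
reflections `s i' * a ^ k`; over `M i i'` steps every `k < 2 * M i i'` occurs once, and `k`,
`k + M i i'` name the same reflection, so the signs cancel in pairs. -/
theorem isLiftable_signPerm : M.IsLiftable cs.signPerm := by
  classical
  intro i i'
  have hab : s i' * (s i * s i') * (s i')⁻¹ = (s i * s i')⁻¹ := by simp [mul_assoc]
  ext ⟨t, ε⟩ : 1
  rw [Equiv.Perm.pow_apply_of_apply_eq_conj _ _ _ (cs.signPerm_mul_signPerm_apply i i'),
    prod_sign_conj_pow_eq hab, prod_sign_pow_eq_one (cs.simple_mul_simple_pow i i')]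
  simp [cs.simple_mul_simple_pow]

noncomputable def signRep : W →* Equiv.Perm (W × ℤˣ) :=
  cs.lift ⟨cs.signPerm, cs.isLiftable_signPerm⟩

theorem signRep_simple (i : B) : cs.signRep (s i) = cs.signPerm i :=
  cs.lift_apply_simple cs.isLiftable_signPerm i

open Classical in
theorem signRep_wordProd_apply (ω : List B) (t : W) (ε : ℤˣ) :
    cs.signRep (π ω) (t, ε) = (π ω * t * (π ω)⁻¹, ε * (-1) ^ (ris ω).count t) := by
  induction ω generalizing t ε with
  | nil => simp [rightInvSeq]
  | cons i ω ih =>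
    rw [wordProd_cons, map_mul, Equiv.Perm.mul_apply, ih, signRep_simple, signPerm_apply,
      rightInvSeq, List.count_cons, conj_eq_iff_eq_inv_conj]
    by_cases h : t = (π ω)⁻¹ * s i * π ω
    · subst h; simp [pow_succ, mul_assoc]
    · simp only [h, if_false, beq_iff_eq, Ne.symm h, add_zero]
      simp [mul_assoc]

noncomputable def invSign (w t : W) : ℤˣ := (cs.signRep w (t, 1)).2

theorem signRep_apply (w t : W) (ε : ℤˣ) :
    cs.signRep w (t, ε) = (w * t * w⁻¹, ε * cs.invSign w t) := by
  classical
  obtain ⟨ω, rfl⟩ := cs.wordProd_surjective w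
  simp [invSign, signRep_wordProd_apply]

open Classical in
theorem invSign_wordProd (ω : List B) (t : W) : cs.invSign (π ω) t = (-1) ^ (ris ω).count t := by
  simp [invSign, signRep_wordProd_apply]

theorem invSign_mul (u v t : W) :
    cs.invSign (u * v) t = cs.invSign v t * cs.invSign u (v * t * v⁻¹) := by
  rw [invSign, map_mul, Equiv.Perm.mul_apply, signRep_apply, signRep_apply, one_mul]

@[simp]
theorem invSign_one (t : W) : cs.invSign 1 t = 1 := by
  simp [invSign]

theorem invSign_conj_self (v t : W) : cs.invSign (v * t * v⁻¹) (v * t * v⁻¹) = cs.invSign t t := by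
  have hv : v⁻¹ * (v * t * v⁻¹) * v⁻¹⁻¹ = t := by group
  have ht : t * t * t⁻¹ = t := by group
  have h := cs.invSign_mul v v⁻¹ (v * t * v⁻¹)
  rw [mul_inv_cancel, invSign_one, hv] at h
  rw [invSign_mul, invSign_mul, hv, ht, mul_left_comm, ← h, mul_one]

theorem invSign_self {t : W} (ht : cs.IsReflection t) : cs.invSign t t = -1 := by
  obtain ⟨v, i, rfl⟩ := ht
  rw [invSign_conj_self, invSign, signRep_simple, signPerm_apply, if_pos rfl]

theorem mem_rightInvSeq_of_invSign_eq_neg_one {ω : List B} {t : W}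
    (h : cs.invSign (π ω) t = -1) : t ∈ ris ω := by
  classical
  rw [invSign_wordProd] at h
  refine List.count_pos_iff.mp (Nat.pos_of_ne_zero fun h0 ↦ ?_)
  simp [h0] at h

theorem invSign_eq_neg_one_iff {w t : W} (ht : cs.IsReflection t) :
    cs.invSign w t = -1 ↔ cs.IsRightInversion w t := by
  have hforward : ∀ w, cs.invSign w t = -1 → cs.IsRightInversion w t := fun w h ↦ by
    obtain ⟨ω, hω, rfl⟩ := cs.exists_isReduced w
    exact cs.isRightInversion_of_mem_rightInvSeq hω (cs.mem_rightInvSeq_of_invSign_eq_neg_one h)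
  refine ⟨hforward w, fun hinv ↦ ?_⟩
  refine (Int.units_eq_one_or _).resolve_left fun h1 ↦ ?_
  have hwt : cs.IsRightInversion (w * t) t := by
    apply hforward
    rw [invSign_mul, mul_inv_cancel_right, invSign_self cs ht, h1, mul_one]
  have := hwt.2
  rw [mul_assoc, ht.mul_self, mul_one] at this
  exact lt_asymm hinv.2 this

theorem mem_rightInvSeq_of_isRightInversion {ω : List B} {t : W}
    (h : cs.IsRightInversion (π ω) t) : t ∈ ris ω :=
  cs.mem_rightInvSeq_of_invSign_eq_neg_one ((cs.invSign_eq_neg_one_iff h.1).mpr h)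

def rightInversions (w : W) : Set W := {t | cs.IsRightInversion w t}

theorem length_eq_encard_rightInversions (w : W) : (ℓ w : ℕ∞) = (cs.rightInversions w).encard := by
  classical
  obtain ⟨ω, hω, rfl⟩ := cs.exists_isReduced w
  have hset : cs.rightInversions (π ω) = ↑(ris ω).toFinset := by
    ext t
    simp only [List.coe_toFinset, Set.mem_ofPred_eq]
    exact ⟨cs.mem_rightInvSeq_of_isRightInversion, cs.isRightInversion_of_mem_rightInvSeq hω⟩
  rw [hset, Set.encard_coe_eq_coe_finsetCard, List.toFinset_card_of_nodup hω.nodup_rightInvSeq,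
    length_rightInvSeq, hω]

theorem rightInversions_mul (v u : W) :
    cs.rightInversions (v * u) =
      symmDiff (cs.rightInversions u) (MulAut.conj u ⁻¹' cs.rightInversions v) := by
  ext t
  simp only [Set.mem_symmDiff, Set.mem_preimage, MulAut.conj_apply, rightInversions,
    Set.mem_ofPred_eq]
  by_cases ht : cs.IsReflection t
  · rw [← cs.invSign_eq_neg_one_iff ht, ← cs.invSign_eq_neg_one_iff ht,
      ← cs.invSign_eq_neg_one_iff (ht.conj u), invSign_mul]
    rcases Int.units_eq_one_or (cs.invSign u t) with h | h <;>
    rcases Int.units_eq_one_or (cs.invSign v (u * t * u⁻¹)) with h' | h' <;> simp [h, h']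
  · have ht' : ¬cs.IsReflection (u * t * u⁻¹) := by rwa [isReflection_conj_iff]
    simp only [IsRightInversion, ht, ht', false_and, or_self]

theorem length_mul_of_disjoint {v u : W}
    (h : Disjoint (cs.rightInversions u) (MulAut.conj u ⁻¹' cs.rightInversions v)) :
    ℓ (v * u) = ℓ v + ℓ u := by
  have hcard : (cs.rightInversions (v * u)).encard =
      (cs.rightInversions u).encard + (cs.rightInversions v).encard := by
    rw [rightInversions_mul, h.symmDiff_eq_sup,
      ← Set.encard_preimage_of_bijective (MulAut.conj u).bijective (cs.rightInversions v)]
    exact Set.encard_union_eq h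
  simp only [← length_eq_encard_rightInversions] at hcard
  rw [add_comm]
  exact_mod_cast hcard

theorem exists_eraseIdx_of_isRightInversion {ω : List B} {t : W}
    (h : cs.IsRightInversion (π ω) t) : ∃ j < ω.length, π ω * t = π (ω.eraseIdx j) := by
  obtain ⟨j, hj, rfl⟩ := List.mem_iff_getElem.mp (cs.mem_rightInvSeq_of_isRightInversion h)
  refine ⟨j, by simpa using hj, ?_⟩
  rw [← List.getD_eq_getElem _ 1 hj, wordProd_mul_getD_rightInvSeq]

theorem exists_sublist_length_lt_of_not_isReduced {ω : List B} (h : ¬cs.IsReduced ω) :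
    ∃ ω' : List B, ω'.Sublist ω ∧ ω'.length < ω.length ∧ π ω' = π ω := by
  induction ω using List.reverseRecOn with
  | nil => exact absurd (by simp [IsReduced]) h
  | append_singleton ω i ih =>
    have hprod : π (ω ++ [i]) = π ω * s i := by rw [wordProd_append, wordProd_singleton]
    rcases cs.length_mul_simple (π ω) i with hlen | hlen
    · have hω : ¬cs.IsReduced ω := fun hω ↦ h (by simp [IsReduced, hprod, hlen, hω.eq])
      obtain ⟨ω', hsub, hlt, hω'⟩ := ih hω
      refine ⟨ω' ++ [i], hsub.append_right [i], by simpa using hlt, ?_⟩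
      rw [hprod, wordProd_append, hω', wordProd_singleton]
    · obtain ⟨j, hj, hω'⟩ :=
        cs.exists_eraseIdx_of_isRightInversion (ω := ω) ⟨cs.isReflection_simple i, by omega⟩
      refine ⟨ω.eraseIdx j, (List.eraseIdx_sublist ω j).trans (List.sublist_append_left ω [i]),
        by simp [List.length_eraseIdx_of_lt hj], by rw [hprod, hω']⟩

theorem exists_isReduced_sublist (ω : List B) :
    ∃ ω' : List B, ω'.Sublist ω ∧ cs.IsReduced ω' ∧ π ω' = π ω := by
  induction h : ω.length using Nat.strong_induction_on generalizing ω with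
  | _ n ih =>
    by_cases hω : cs.IsReduced ω
    · exact ⟨ω, List.Sublist.refl ω, hω, rfl⟩
    obtain ⟨ω', hsub, hlt, hω'⟩ := cs.exists_sublist_length_lt_of_not_isReduced hω
    obtain ⟨ω'', hsub', hred, hω''⟩ := ih _ (h ▸ hlt) ω' rfl
    exact ⟨ω'', hsub'.trans hsub, hred, hω''.trans hω'⟩

theorem simple_mem_parabolic {K : Set B} {i : B} (hi : i ∈ K) : s i ∈ cs.parabolic K :=
  Subgroup.subset_closure ⟨i, hi, rfl⟩

theorem mem_parabolic_univ (w : W) : w ∈ cs.parabolic Set.univ := by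
  rw [parabolic, Set.image_univ, subgroup_closure_range_simple]
  exact Subgroup.mem_top w

theorem wordProd_mem_parabolic {K : Set B} {ω : List B} (h : ∀ i ∈ ω, i ∈ K) :
    π ω ∈ cs.parabolic K := by
  refine list_prod_mem fun _ hx ↦ ?_
  obtain ⟨i, hi, rfl⟩ := List.mem_map.mp hx
  exact cs.simple_mem_parabolic (h i hi)

theorem exists_wordProd_eq_of_mem_parabolic {K : Set B} {w : W} (hw : w ∈ cs.parabolic K) :
    ∃ ω : List B, (∀ i ∈ ω, i ∈ K) ∧ π ω = w := by
  induction hw using Subgroup.closure_induction with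
  | mem x hx =>
    obtain ⟨i, hi, rfl⟩ := hx
    exact ⟨[i], by simpa using hi, wordProd_singleton cs i⟩
  | one => exact ⟨[], by simp, wordProd_nil cs⟩
  | mul x y _ _ ihx ihy =>
    obtain ⟨ω₁, h₁, rfl⟩ := ihx
    obtain ⟨ω₂, h₂, rfl⟩ := ihy
    exact ⟨ω₁ ++ ω₂, by simpa using fun i hi ↦ hi.elim (h₁ i) (h₂ i), wordProd_append cs ω₁ ω₂⟩
  | inv x _ ihx =>
    obtain ⟨ω, hω, rfl⟩ := ihx
    exact ⟨ω.reverse, by simpa using hω, wordProd_reverse cs ω⟩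

theorem exists_isReduced_of_mem_parabolic {K : Set B} {w : W} (hw : w ∈ cs.parabolic K) :
    ∃ ω : List B, cs.IsReduced ω ∧ (∀ i ∈ ω, i ∈ K) ∧ π ω = w := by
  obtain ⟨ω, hK, rfl⟩ := cs.exists_wordProd_eq_of_mem_parabolic hw
  obtain ⟨ω', hsub, hred, hω'⟩ := cs.exists_isReduced_sublist ω
  exact ⟨ω', hred, fun i hi ↦ hK i (hsub.subset hi), hω'⟩

theorem exists_mem_isRightDescent_of_mem_parabolic {K : Set B} {w : W}
    (hw : w ∈ cs.parabolic K) (hne : w ≠ 1) : ∃ k ∈ K, cs.IsRightDescent w k := by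
  obtain ⟨ω, hred, hK, rfl⟩ := cs.exists_isReduced_of_mem_parabolic hw
  rcases List.eq_nil_or_concat ω with rfl | ⟨ω', k, rfl⟩
  · exact absurd (wordProd_nil cs) hne
  refine ⟨k, hK k (by simp), ?_⟩
  have hlen := hred.eq
  rw [IsRightDescent, wordProd_concat, simple_mul_simple_cancel_right]
  rw [wordProd_concat, List.length_concat] at hlen
  have := cs.length_wordProd_le ω'
  omega

theorem mem_parabolic_of_mem_rightInvSeq {K : Set B} {ω : List B} (h : ∀ i ∈ ω, i ∈ K) {t : W}
    (ht : t ∈ ris ω) : t ∈ cs.parabolic K := by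
  induction ω with
  | nil => simp [rightInvSeq] at ht
  | cons i ω ih =>
    have hω : π ω ∈ cs.parabolic K := cs.wordProd_mem_parabolic fun j hj ↦ h j (by simp [hj])
    rcases List.mem_cons.mp ht with rfl | ht
    · exact mul_mem (mul_mem (inv_mem hω) (cs.simple_mem_parabolic (h i (by simp)))) hω
    · exact ih (fun j hj ↦ h j (by simp [hj])) ht

theorem rightInversions_subset_parabolic {K : Set B} {w : W} (hw : w ∈ cs.parabolic K) :
    cs.rightInversions w ⊆ cs.parabolic K := by
  obtain ⟨ω, hK, rfl⟩ := cs.exists_wordProd_eq_of_mem_parabolic hw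
  exact fun t ht ↦ cs.mem_parabolic_of_mem_rightInvSeq hK (cs.mem_rightInvSeq_of_isRightInversion ht)

theorem length_mul_of_forall_not_isRightInversion {K : Set B} {v u : W}
    (hv : ∀ t ∈ cs.parabolic K, ¬cs.IsRightInversion v t) (hu : u ∈ cs.parabolic K) :
    ℓ (v * u) = ℓ v + ℓ u :=
  cs.length_mul_of_disjoint <| Set.disjoint_left.mpr fun _ ht ↦
    hv _ (mul_mem (mul_mem hu (cs.rightInversions_subset_parabolic hu ht)) (inv_mem hu))

theorem length_mul_of_mem_minRight {K : Set B} {w u : W} (hw : w ∈ cs.minRight K)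
    (hu : u ∈ cs.parabolic K) : ℓ (w * u) = ℓ w + ℓ u := by
  obtain ⟨u₀, hu₀, hmin⟩ : ∃ u₀ ∈ cs.parabolic K, ∀ x ∈ cs.parabolic K, ℓ (w * u₀) ≤ ℓ (w * x) :=
    ⟨_, Function.argminOn_mem _ _ ⟨1, one_mem _⟩,
      fun x hx ↦ Function.argminOn_le (fun x ↦ ℓ (w * x)) _ hx⟩
  have hadd : ∀ x ∈ cs.parabolic K, ℓ (w * u₀ * x) = ℓ (w * u₀) + ℓ x := by
    refine fun x hx ↦ cs.length_mul_of_forall_not_isRightInversion (fun t ht hinv ↦ ?_) hx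
    have := hmin _ (mul_mem hu₀ ht)
    rw [← mul_assoc] at this
    exact absurd hinv.2 this.not_gt
  obtain rfl : u₀ = 1 := by
    by_contra hne
    obtain ⟨k, hk, hdesc⟩ :=
      cs.exists_mem_isRightDescent_of_mem_parabolic (inv_mem hu₀) (inv_ne_one.mpr hne)
    have h₁ := hadd _ (inv_mem hu₀)
    have h₂ := hadd _ (mul_mem (inv_mem hu₀) (cs.simple_mem_parabolic hk))
    rw [mul_inv_cancel_right] at h₁
    rw [← mul_assoc, mul_inv_cancel_right] at h₂
    have := hw k hk
    unfold IsRightDescent at hdesc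
    omega
  simpa using hadd u hu

theorem length_mul_longest {K : Set B} {m u : W} (hm : m ∈ cs.parabolic K)
    (hmax : ∀ x ∈ cs.parabolic K, ℓ x ≤ ℓ m) (hu : u ∈ cs.parabolic K) :
    ℓ (u * m) + ℓ u = ℓ m := by
  have hN : cs.rightInversions m = {t | cs.IsReflection t ∧ t ∈ cs.parabolic K} := by
    refine subset_antisymm (fun t ht ↦ ⟨ht.1, cs.rightInversions_subset_parabolic hm ht⟩) ?_
    rintro t ⟨ht, htK⟩
    exact ⟨ht, lt_of_le_of_ne (hmax _ (mul_mem hm htK)) (ht.length_mul_left_ne m)⟩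
  have hsub : MulAut.conj m ⁻¹' cs.rightInversions u ⊆ cs.rightInversions m := by
    intro t ht
    simp only [Set.mem_preimage, MulAut.conj_apply] at ht
    have htK : t ∈ cs.parabolic K := by
      simpa [mul_assoc] using
        mul_mem (mul_mem (inv_mem hm) (cs.rightInversions_subset_parabolic hu ht)) hm
    rw [hN]
    exact ⟨(cs.isReflection_conj_iff m t).mp ht.1, htK⟩
  have hcard := Set.encard_sdiff_add_encard_of_subset hsub
  rw [← symmDiff_of_ge hsub, ← rightInversions_mul,
    Set.encard_preimage_of_bijective (MulAut.conj m).bijective] at hcard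
  simp only [← length_eq_encard_rightInversions] at hcard
  exact_mod_cast hcard

theorem longest_mul_self {K : Set B} {m : W} (hm : m ∈ cs.parabolic K)
    (hmax : ∀ x ∈ cs.parabolic K, ℓ x ≤ ℓ m) : m * m = 1 :=
  cs.length_eq_zero_iff.mp (by have := cs.length_mul_longest hm hmax hm; omega)

theorem length_mul_simple_add_one_of_longest {K : Set B} {m : W} {k : B}
    (hm : m ∈ cs.parabolic K) (hmax : ∀ x ∈ cs.parabolic K, ℓ x ≤ ℓ m) (hk : k ∈ K) :
    ℓ (m * s k) + 1 = ℓ m :=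
  (cs.length_mul_simple m k).resolve_left fun h ↦ by
    have := hmax _ (mul_mem hm (cs.simple_mem_parabolic hk))
    omega

theorem length_mul_mul_longest {K : Set B} {w x w₀ : W} (hw₀ : ∀ v : W, ℓ v ≤ ℓ w₀)
    (hw : w ∈ cs.minRight K) (hx : x ∈ cs.parabolic K) : ℓ (w * x * w₀) + ℓ w + ℓ x = ℓ w₀ := by
  rw [← cs.length_mul_longest (cs.mem_parabolic_univ w₀) (fun v _ ↦ hw₀ v)
    (cs.mem_parabolic_univ (w * x)), cs.length_mul_of_mem_minRight hw hx, add_assoc]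

end CoxeterSystem

theorem length_additive_wuy (δI : B ≃ B) (J : Set B)
    (w₀ : W) (hw₀ : ∀ v : W, cs.length v ≤ cs.length w₀)
    (w₀J : W) (hw₀Jmem : w₀J ∈ cs.parabolic (δI '' J))
    (hw₀J : ∀ u ∈ cs.parabolic (δI '' J), cs.length u ≤ cs.length w₀J)
    (J' : Set B) (hJ' : J' = {i : B | ∃ j ∈ J, cs.simple i = w₀ * cs.simple (δI j) * w₀})
    (y : W) (hy : y = w₀ * w₀J)
    (w : W) (hw : w ∈ cs.minRight (δI '' J))
    (u : W) (hu : u ∈ cs.parabolic (δI '' J)) :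
    w * y⁻¹ ∈ cs.minRight J' ∧
    cs.length (w * u * y⁻¹) = cs.length (w * y⁻¹) + cs.length u := by
  have hw₀sq := cs.longest_mul_self (cs.mem_parabolic_univ w₀) fun v _ ↦ hw₀ v
  have hyinv : y⁻¹ = w₀J * w₀ := by
    rw [hy, mul_inv_rev, inv_eq_of_mul_eq_one_right hw₀sq,
      inv_eq_of_mul_eq_one_right (cs.longest_mul_self hw₀Jmem hw₀J)]
  have hwy := cs.length_mul_mul_longest hw₀ hw hw₀Jmem
  rw [mul_assoc, ← hyinv] at hwy
  constructor
  · rw [hJ']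
    rintro i ⟨j, hj, hsi⟩
    have hk : δI j ∈ δI '' J := ⟨j, hj, rfl⟩
    have hdesc := cs.length_mul_simple_add_one_of_longest hw₀Jmem hw₀J hk
    have hwys := cs.length_mul_mul_longest hw₀ hw (mul_mem hw₀Jmem (cs.simple_mem_parabolic hk))
    have heq : w * (w₀J * cs.simple (δI j)) * w₀ = w * y⁻¹ * cs.simple i := by
      rw [hsi, hyinv]
      simp only [mul_assoc, ← mul_assoc w₀ w₀, hw₀sq, one_mul]
    rw [heq] at hwys
    show cs.length (w * y⁻¹) < cs.length (w * y⁻¹ * cs.simple i)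
    omega
  · have hwu := cs.length_mul_mul_longest hw₀ hw (mul_mem hu hw₀Jmem)
    have hu' := cs.length_mul_longest hw₀Jmem hw₀J hu
    rw [← mul_assoc, mul_assoc _ w₀J, ← hyinv] at hwu
    omega
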